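/- arXiv:1910.01817 — 3 statements merged into one kernel-verified Lean document; each statement's English description precedes it below -/
import Mathlib

section
/- Let R be a commutative ring and u_1, …, u_n a d-sequence in R, meaning that no u_i lies in the ideal generated by the other u_j's and ((u_1,…,u_i) : u_{i+1} u_k) = ((u_1,…,u_i) : u_k) for all 0 ≤ i and k ≥ i+1. Then for each 1 ≤ i ≤ n, ((u_1,…,u_{i-1}) : u_i) ∩ (u_1,…,u_n) = (u_1,…,u_{i-1}). -/
/-- `u 0, …, u (n-1)` is a *d-sequence* (Huneke): no `u i` lies in the ideal
generated by the other elements, and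
`((u_0,…,u_{i-1}) : u_i u_k) = ((u_0,…,u_{i-1}) : u_k)` for all `k ≥ i`. -/
def IsDSequence {R : Type*} [CommRing R] {n : ℕ} (u : Fin n → R) : Prop :=
  (∀ i : Fin n, u i ∉ Ideal.span (u '' {j | j ≠ i})) ∧
  ∀ i k : Fin n, i ≤ k →
    (Ideal.span (u '' {j | j < i})).colon (Ideal.span {u i * u k}) =
      (Ideal.span (u '' {j | j < i})).colon (Ideal.span {u k})

/-!
Write `J m` (`prefixSpan u m`) for the ideal generated by the `u_j` with `j < m`, and let
`x u_i ∈ J i`. The d-sequence condition at `i` upgrades this to `x u_k ∈ J i` for every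
`k ≥ i`. Now descend from `x ∈ J n` to `x ∈ J i`: if `x = w + a u_k` with `w ∈ J k` and
`x u_k ∈ J k`, then `a u_k² ∈ J k`, and `(J k : u_k²) = (J k : u_k)` gives `a u_k ∈ J k`.
-/
open Ideal

section

variable {R : Type*} [CommRing R]

theorem Ideal.mem_of_mem_sup_span_singleton_of_mul_mem {I : Ideal R} {x y : R}
    (hy : I.colon (span {y * y}) ≤ I.colon (span {y})) (hx : x ∈ I ⊔ span {y})
    (hxy : x * y ∈ I) : x ∈ I := by
  obtain ⟨w, hw, _, ha, rfl⟩ := Submodule.mem_sup.1 hx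
  obtain ⟨a, rfl⟩ := mem_span_singleton'.1 ha
  have hayy : a * (y * y) ∈ I := by
    have : a * (y * y) = (w + a * y) * y - w * y := by ring
    rw [this]
    exact I.sub_mem hxy (I.mul_mem_right y hw)
  have hay : a * y ∈ I := mem_colon_span_singleton.1 (hy (mem_colon_span_singleton.2 hayy))
  exact I.add_mem hw hay

variable {n : ℕ}

def prefixSpan (u : Fin n → R) (m : ℕ) : Ideal R :=
  span (u '' {j | (j : ℕ) < m})

theorem prefixSpan_mono (u : Fin n → R) {m m' : ℕ} (h : m ≤ m') :
    prefixSpan u m ≤ prefixSpan u m' :=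
  span_mono (Set.image_mono fun _ hj => lt_of_lt_of_le hj h)

theorem prefixSpan_succ (u : Fin n → R) (k : Fin n) :
    prefixSpan u (k + 1) = prefixSpan u k ⊔ span {u k} := by
  have : {j : Fin n | (j : ℕ) < k + 1} = {j : Fin n | (j : ℕ) < k} ∪ {k} := by
    ext j
    simp only [Set.mem_ofPred_eq, Set.mem_union, Set.mem_singleton_iff, Fin.ext_iff]
    omega
  rw [prefixSpan, this, Set.image_union, span_union, Set.image_singleton]
  rfl

theorem prefixSpan_eq_span_range (u : Fin n → R) : prefixSpan u n = span (Set.range u) := by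
  rw [prefixSpan, ← Set.image_univ]
  congr
  ext j
  simp [j.isLt]

end

namespace IsDSequence

variable {R : Type*} [CommRing R] {n : ℕ} {u : Fin n → R}

theorem mul_mem_of_le (hu : IsDSequence u) {i k : Fin n} (hik : i ≤ k) {x : R}
    (hx : x * u i ∈ prefixSpan u i) : x * u k ∈ prefixSpan u i := by
  have hx' : x ∈ (prefixSpan u i).colon (span {u i * u k}) := by
    rw [mem_colon_span_singleton, ← mul_assoc]
    exact mul_mem_right _ _ hx
  exact mem_colon_span_singleton.1 ((hu.2 i k hik).le hx')

theorem mem_prefixSpan_of_mem_prefixSpan_add (hu : IsDSequence u) {x : R} {i d : ℕ}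
    (hd : i + d ≤ n) (hmul : ∀ k : Fin n, i ≤ k → x * u k ∈ prefixSpan u i)
    (hx : x ∈ prefixSpan u (i + d)) : x ∈ prefixSpan u i := by
  induction d with
  | zero => exact hx
  | succ d ih =>
    let k : Fin n := ⟨i + d, by omega⟩
    apply ih (by omega)
    rw [← add_assoc, show i + d = k from rfl, prefixSpan_succ] at hx
    refine mem_of_mem_sup_span_singleton_of_mul_mem (hu.2 k k le_rfl).le hx ?_
    exact prefixSpan_mono u (Nat.le_add_right i d) (hmul k (Nat.le_add_right i d))

end IsDSequence

/-- Costa. If `u_1, …, u_n` is a d-sequence in a commutative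
ring `R`, then `((u_1,…,u_{i-1}) : u_i) ∩ (u_1,…,u_n) = (u_1,…,u_{i-1})`
for each `1 ≤ i ≤ n`. -/
theorem dsequence_colon_inter {R : Type*} [CommRing R] {n : ℕ} (u : Fin n → R)
    (hu : IsDSequence u) (i : Fin n) :
    (Ideal.span (u '' {j | j < i})).colon (Ideal.span {u i}) ⊓
        Ideal.span (Set.range u) =
      Ideal.span (u '' {j | j < i}) := by
  change (prefixSpan u i).colon _ ⊓ _ = prefixSpan u i
  refine le_antisymm ?_ (le_inf le_colon (span_mono (Set.image_subset_range u _)))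
  rintro x ⟨hxi, hx⟩
  have hmul (k : Fin n) (hik : i ≤ k) : x * u k ∈ prefixSpan u i :=
    hu.mul_mem_of_le hik (mem_colon_span_singleton.1 hxi)
  have hlen : (i : ℕ) + (n - i) = n := by omega
  refine hu.mem_prefixSpan_of_mem_prefixSpan_add hlen.le hmul ?_
  rwa [hlen, prefixSpan_eq_span_range]
end

section
/- Let G be a finite simple graph on vertex set [n] with binomial edge ideal J_G ⊆ S = K[x_1,…,x_n,y_1,…,y_n], and let H be an induced subgraph of G on vertex set V(H) with binomial edge ideal J_H ⊆ S_H = K[x_i,y_i : i ∈ V(H)]. Then for all s ≥ 1, J_H^s = J_G^s ∩ S_H. -/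
open MvPolynomial

/-- The binomial edge ideal of a simple graph `G` on vertex set `V`, inside the
polynomial ring `K[x_i, y_i : i ∈ V]` (the `x`-variables are indexed by `Sum.inl`
and the `y`-variables by `Sum.inr`). -/
noncomputable def binomialEdgeIdeal (K : Type) [Field K] {V : Type}
    (G : SimpleGraph V) : Ideal (MvPolynomial (V ⊕ V) K) :=
  Ideal.span {f | ∃ i j, G.Adj i j ∧
    f = X (Sum.inl i) * X (Sum.inr j) - X (Sum.inl j) * X (Sum.inr i)}

/-!
Killing the variables of the vertices outside `W` is a ring retraction `S → S_H` of the inclusion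
`S_H → S`. The inclusion maps `J_H` into `J_G`, and the retraction maps `J_G` into `J_H`, because it
kills every generator of an edge leaving `W`. Both facts pass to `s`-th powers, and whenever
`f(I) ⊆ J` and `g(J) ⊆ I` for a retraction `g` of `f`, the ideal `I` is the contraction of `J`.
-/

theorem Ideal.eq_comap_of_leftInverse {R S F G : Type*} [Semiring R] [Semiring S]
    [FunLike F R S] [RingHomClass F R S] [FunLike G S R] [RingHomClass G S R]
    {f : F} {g : G} (h : Function.LeftInverse g f) {I : Ideal R} {J : Ideal S}
    (hf : I.map f ≤ J) (hg : J.map g ≤ I) : I = J.comap f :=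
  le_antisymm (Ideal.map_le_iff_le_comap.mp hf) ((Ideal.comap_le_map_of_inverse f g J h).trans hg)

theorem Set.injective_sumMap_val {V : Type*} (W : Set V) :
    Function.Injective (Sum.map (Subtype.val : W → V) (Subtype.val : W → V)) :=
  Subtype.val_injective.sumMap Subtype.val_injective

namespace MvPolynomial

theorem killCompl_X_of_notMem_range {R σ τ : Type*} [CommSemiring R] {f : σ → τ}
    (hf : Function.Injective f) {t : τ} (ht : t ∉ Set.range f) :
    killCompl (R := R) hf (X t) = 0 := by
  classical
  rw [killCompl, aeval_X, dif_neg ht]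

theorem killCompl_X_inl_of_notMem {R V : Type*} [CommSemiring R] {W : Set V} {v : V}
    (hv : v ∉ W) :
    killCompl W.injective_sumMap_val (X (Sum.inl v) : MvPolynomial (V ⊕ V) R) = 0 :=
  killCompl_X_of_notMem_range _ (by rintro ⟨⟨w⟩ | ⟨w⟩, h⟩ <;> simp at h; exact hv (h ▸ w.2))

theorem killCompl_X_inr_of_notMem {R V : Type*} [CommSemiring R] {W : Set V} {v : V}
    (hv : v ∉ W) :
    killCompl W.injective_sumMap_val (X (Sum.inr v) : MvPolynomial (V ⊕ V) R) = 0 :=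
  killCompl_X_of_notMem_range _ (by rintro ⟨⟨w⟩ | ⟨w⟩, h⟩ <;> simp at h; exact hv (h ▸ w.2))

end MvPolynomial

section BinomialEdgeIdeal

variable {K : Type} [Field K] {V : Type} (G : SimpleGraph V) (W : Set V)

theorem binomialEdgeIdeal_map_rename_induce_le :
    (binomialEdgeIdeal K (G.induce W)).map
        (rename (Sum.map (Subtype.val : W → V) Subtype.val)) ≤ binomialEdgeIdeal K G := by
  rw [Ideal.map_le_iff_le_comap, binomialEdgeIdeal, Ideal.span_le]
  rintro f ⟨i, j, hij, rfl⟩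
  exact Ideal.subset_span ⟨i, j, hij, by simp⟩

theorem binomialEdgeIdeal_map_killCompl_le :
    (binomialEdgeIdeal K G).map (killCompl W.injective_sumMap_val) ≤
      binomialEdgeIdeal K (G.induce W) := by
  rw [Ideal.map_le_iff_le_comap, binomialEdgeIdeal, Ideal.span_le]
  rintro f ⟨i, j, hij, rfl⟩
  rw [SetLike.mem_coe, Ideal.mem_comap]
  by_cases hiW : i ∈ W
  · by_cases hjW : j ∈ W
    · lift i to W using hiW
      lift j to W using hjW
      have hgen : (X (Sum.inl (i : V)) * X (Sum.inr (j : V)) - X (Sum.inl (j : V)) *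
          X (Sum.inr (i : V)) : MvPolynomial (V ⊕ V) K) = rename (Sum.map Subtype.val Subtype.val)
            (X (Sum.inl i) * X (Sum.inr j) - X (Sum.inl j) * X (Sum.inr i)) := by
        simp
      rw [hgen, killCompl_rename_app]
      exact Ideal.subset_span ⟨i, j, hij, rfl⟩
    · simp [killCompl_X_inl_of_notMem hjW, killCompl_X_inr_of_notMem hjW]
  · simp [killCompl_X_inl_of_notMem hiW, killCompl_X_inr_of_notMem hiW]

end BinomialEdgeIdeal

theorem binomialEdgeIdeal_pow_induced_general {K : Type} [Field K] {n : ℕ}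
    (G : SimpleGraph (Fin n)) (W : Set (Fin n)) (s : ℕ) :
    (binomialEdgeIdeal K (G.induce W)) ^ s =
      Ideal.comap (rename (Sum.map (Subtype.val : W → Fin n) Subtype.val) :
          MvPolynomial (↥W ⊕ ↥W) K →ₐ[K] MvPolynomial (Fin n ⊕ Fin n) K)
        ((binomialEdgeIdeal K G) ^ s) := by
  refine Ideal.eq_comap_of_leftInverse (killCompl_rename_app W.injective_sumMap_val) ?_ ?_
  · rw [Ideal.map_pow]
    exact Ideal.pow_right_mono (binomialEdgeIdeal_map_rename_induce_le G W) s
  · rw [Ideal.map_pow]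
    exact Ideal.pow_right_mono (binomialEdgeIdeal_map_killCompl_le G W) s

/-- If `H` is the induced subgraph of `G` on a vertex subset
`W`, then for all `s ≥ 1`, `J_H^s = J_G^s ∩ S_H`, where `S_H` is viewed as a
subring of `S` via the inclusion of variables (so the intersection is the
contraction along the injective map `S_H → S`). -/
theorem binomialEdgeIdeal_pow_induced {K : Type} [Field K] {n : ℕ}
    (G : SimpleGraph (Fin n)) (W : Set (Fin n)) (s : ℕ) (hs : 1 ≤ s) :
    (binomialEdgeIdeal K (G.induce W)) ^ s =
      Ideal.comap (rename (Sum.map (Subtype.val : W → Fin n) Subtype.val) :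
          MvPolynomial (↥W ⊕ ↥W) K →ₐ[K] MvPolynomial (Fin n ⊕ Fin n) K)
        ((binomialEdgeIdeal K G) ^ s) :=
  binomialEdgeIdeal_pow_induced_general G W s
end

section
/- Let G be a non-simplicial-vertex decomposition: let G be a finite simple graph and v ∈ V(G) a vertex that is not simplicial (i.e., v lies in at least two maximal cliques). Then J_G = (J_{G∖v} + (x_v, y_v)) ∩ J_{G_v}, where G_v is the graph on V(G) with edge set E(G) ∪ {{u,w} : u,w ∈ N_G(v)}. -/
open MvPolynomial

/-- The induced subgraph `G ∖ v`-with-isolated-vertices construction: the graph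
on the same vertex set whose edges are the edges of `G` within `W`. -/
def inducedOn {V : Type} (G : SimpleGraph V) (W : Set V) : SimpleGraph V where
  Adj i j := G.Adj i j ∧ i ∈ W ∧ j ∈ W
  symm := ⟨fun i j ⟨h, hi, hj⟩ => ⟨h.symm, hj, hi⟩⟩
  loopless := ⟨fun i h => G.loopless.irrefl i h.1⟩

/-- `G_v`: the graph on `V(G)` with edge set
`E(G) ∪ {{a,b} : a, b ∈ N_G(v)}`. -/
def gvGraph {V : Type} (G : SimpleGraph V) (v : V) : SimpleGraph V where
  Adj a b := a ≠ b ∧ (G.Adj a b ∨ (G.Adj v a ∧ G.Adj v b))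
  symm := ⟨fun a b ⟨hne, h⟩ => ⟨hne.symm, by tauto⟩⟩
  loopless := ⟨fun a h => h.1 rfl⟩

/-!
Let `π` be the substitution `x_v, y_v ↦ 0`, `M = (x_v, y_v)` and `N` the binomial edge ideal of
the complete graph on `N_G(v)`, so that `J_{G_v} = J_G + N`. Then `p - π p ∈ M` for every `p`,
`π` preserves `J_G`, maps `J_{G∖v} + M` into `J_{G∖v}` and fixes the generators of `N`.
So if `f = g + h` lies in the intersection, with `g ∈ J_G` and `h ∈ N`, then
`π f ∈ J_{G∖v} ⊆ J_G`, `g - π g ∈ J_G` and `h - π h ∈ M N ⊆ J_G`; the last inclusion comes from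
`x_v f_{ab} = x_a f_{vb} - x_b f_{va}` and its analogue for `y_v`.
-/

noncomputable section

namespace MvPolynomial

variable {σ R : Type*} [CommRing R]

def killVars (s : Set σ) : MvPolynomial σ R →ₐ[R] MvPolynomial σ R :=
  aeval (sᶜ.indicator X)

@[simp]
theorem killVars_X_of_mem {s : Set σ} {n : σ} (hn : n ∈ s) :
    killVars (R := R) s (X n) = 0 := by
  simp [killVars, hn]

@[simp]
theorem killVars_X_of_notMem {s : Set σ} {n : σ} (hn : n ∉ s) :
    killVars (R := R) s (X n) = X n := by
  simp [killVars, hn]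

theorem span_X_image_le_ker_killVars (s : Set σ) :
    Ideal.span (X '' s) ≤ RingHom.ker (killVars (R := R) s) := by
  rw [Ideal.span_le]
  rintro _ ⟨n, hn, rfl⟩
  exact killVars_X_of_mem hn

theorem sub_killVars_mem_span_X_image (s : Set σ) (p : MvPolynomial σ R) :
    p - killVars s p ∈ Ideal.span (X '' s) := by
  rw [← Ideal.Quotient.eq]
  suffices (Ideal.Quotient.mkₐ R (Ideal.span (X '' s))).comp (killVars s) =
      Ideal.Quotient.mkₐ R _ from
    (DFunLike.congr_fun this p).symm
  refine algHom_ext fun n => ?_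
  by_cases hn : n ∈ s
  · have : (X n : MvPolynomial σ R) ∈ Ideal.span (X '' s) :=
      Ideal.subset_span (Set.mem_image_of_mem X hn)
    simpa [hn, eq_comm (a := (0 : _ ⧸ _)), Ideal.Quotient.eq_zero_iff_mem] using this
  · simp [hn]

end MvPolynomial

theorem Ideal.sub_mem_mul_span_of_forall_sub_mem {R : Type*} [CommRing R] (φ : R →+* R)
    {I : Ideal R} (hI : ∀ p, p - φ p ∈ I) {S : Set R} (hS : ∀ s ∈ S, φ s = s) {h : R}
    (hh : h ∈ Ideal.span S) : h - φ h ∈ I * Ideal.span S := by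
  induction hh using Submodule.span_induction with
  | mem s hs => simp [hS s hs]
  | zero => simp
  | add a b _ _ ha hb =>
    rw [map_add, add_sub_add_comm]
    exact add_mem ha hb
  | smul p a ha iha =>
    have : p * a - φ (p * a) = (p - φ p) * a + φ p * (a - φ a) := by rw [map_mul]; ring
    rw [smul_eq_mul, this]
    exact add_mem (Ideal.mul_mem_mul (hI p) ha) (Ideal.mul_mem_left _ _ iha)

namespace BinomialEdgeIdeal

variable {K : Type} [Field K] {V : Type}

variable (K) in
def edgeBinomial (i j : V) : MvPolynomial (V ⊕ V) K :=
  X (Sum.inl i) * X (Sum.inr j) - X (Sum.inl j) * X (Sum.inr i)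

theorem edgeBinomial_mem {G : SimpleGraph V} {i j : V} (h : G.Adj i j) :
    edgeBinomial K i j ∈ binomialEdgeIdeal K G :=
  Ideal.subset_span ⟨i, j, h, rfl⟩

theorem binomialEdgeIdeal_le_iff {G : SimpleGraph V} {I : Ideal (MvPolynomial (V ⊕ V) K)} :
    binomialEdgeIdeal K G ≤ I ↔ ∀ i j, G.Adj i j → edgeBinomial K i j ∈ I := by
  refine ⟨fun h i j hij => h (edgeBinomial_mem hij), fun h => Ideal.span_le.mpr ?_⟩
  rintro _ ⟨i, j, hij, rfl⟩
  exact h i j hij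

theorem binomialEdgeIdeal_mono {G H : SimpleGraph V} (h : G ≤ H) :
    binomialEdgeIdeal K G ≤ binomialEdgeIdeal K H :=
  binomialEdgeIdeal_le_iff.mpr fun _ _ hij => edgeBinomial_mem (h hij)

theorem binomialEdgeIdeal_sup (G H : SimpleGraph V) :
    binomialEdgeIdeal K (G ⊔ H) = binomialEdgeIdeal K G ⊔ binomialEdgeIdeal K H := by
  refine le_antisymm (binomialEdgeIdeal_le_iff.mpr fun i j hij => ?_)
    (sup_le (binomialEdgeIdeal_mono le_sup_left) (binomialEdgeIdeal_mono le_sup_right))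
  rcases hij with hG | hH
  · exact Ideal.mem_sup_left (edgeBinomial_mem hG)
  · exact Ideal.mem_sup_right (edgeBinomial_mem hH)

theorem inducedOn_le (G : SimpleGraph V) (W : Set V) : inducedOn G W ≤ G :=
  fun _ _ h => h.1

theorem not_adj_inducedOn_of_notMem {G : SimpleGraph V} {W : Set V} {v : V} (hv : v ∉ W)
    (u : V) : ¬ (inducedOn G W).Adj v u :=
  fun h => hv h.2.1

theorem le_gvGraph (G : SimpleGraph V) (v : V) : G ≤ gvGraph G v :=
  fun _ _ h => ⟨h.ne, Or.inl h⟩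

theorem gvGraph_eq_sup (G : SimpleGraph V) (v : V) :
    gvGraph G v = G ⊔ inducedOn ⊤ (G.neighborSet v) := by
  ext a b
  simp only [gvGraph, inducedOn, SimpleGraph.sup_adj, SimpleGraph.top_adj,
    SimpleGraph.mem_neighborSet]
  constructor
  · rintro ⟨hne, h | h⟩
    exacts [Or.inl h, Or.inr ⟨hne, h⟩]
  · rintro (h | ⟨hne, h⟩)
    exacts [⟨h.ne, Or.inl h⟩, ⟨hne, Or.inr h⟩]

theorem killVars_edgeBinomial_of_ne {v i j : V} (hi : i ≠ v) (hj : j ≠ v) :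
    killVars {Sum.inl v, Sum.inr v} (edgeBinomial K i j) = edgeBinomial K i j := by
  simp [edgeBinomial, hi, hj]

theorem killVars_edgeBinomial_of_eq {v i j : V} (h : i = v ∨ j = v) :
    killVars {Sum.inl v, Sum.inr v} (edgeBinomial K i j) = 0 := by
  rcases h with rfl | rfl <;> simp [edgeBinomial]

theorem binomialEdgeIdeal_le_comap_killVars (G : SimpleGraph V) (v : V) :
    binomialEdgeIdeal K G ≤
      (binomialEdgeIdeal K G).comap (killVars {Sum.inl v, Sum.inr v}) := by
  refine binomialEdgeIdeal_le_iff.mpr fun i j hij => ?_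
  by_cases hv : i = v ∨ j = v
  · simp [killVars_edgeBinomial_of_eq hv]
  · obtain ⟨hi, hj⟩ := not_or.mp hv
    simpa [killVars_edgeBinomial_of_ne hi hj] using edgeBinomial_mem hij

theorem killVars_edgeBinomial_of_adj {H : SimpleGraph V} {v i j : V} (hv : ∀ u, ¬ H.Adj v u)
    (hij : H.Adj i j) :
    killVars {Sum.inl v, Sum.inr v} (edgeBinomial K i j) = edgeBinomial K i j :=
  killVars_edgeBinomial_of_ne (by rintro rfl; exact hv j hij)
    (by rintro rfl; exact hv i hij.symm)

theorem killVars_mem_of_mem_sup {H : SimpleGraph V} {v : V} (hv : ∀ u, ¬ H.Adj v u)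
    {f : MvPolynomial (V ⊕ V) K}
    (hf : f ∈ binomialEdgeIdeal K H ⊔ Ideal.span (X '' {Sum.inl v, Sum.inr v})) :
    killVars {Sum.inl v, Sum.inr v} f ∈ binomialEdgeIdeal K H := by
  suffices binomialEdgeIdeal K H ⊔ Ideal.span (X '' {Sum.inl v, Sum.inr v}) ≤
      (binomialEdgeIdeal K H).comap (killVars {Sum.inl v, Sum.inr v}) from this hf
  refine sup_le (binomialEdgeIdeal_le_iff.mpr fun i j hij => ?_)
    ((span_X_image_le_ker_killVars _).trans (Ideal.comap_mono bot_le))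
  simpa [killVars_edgeBinomial_of_adj hv hij] using edgeBinomial_mem hij

theorem binomialEdgeIdeal_le_inducedOn_sup (G : SimpleGraph V) (v : V) :
    binomialEdgeIdeal K G ≤ binomialEdgeIdeal K (inducedOn G {u | u ≠ v}) ⊔
      Ideal.span (X '' {Sum.inl v, Sum.inr v}) := by
  refine binomialEdgeIdeal_le_iff.mpr fun i j hij => ?_
  by_cases hv : i = v ∨ j = v
  · apply Ideal.mem_sup_right
    simpa [killVars_edgeBinomial_of_eq hv] using
      sub_killVars_mem_span_X_image {Sum.inl v, Sum.inr v} (edgeBinomial K i j)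
  · obtain ⟨hi, hj⟩ := not_or.mp hv
    exact Ideal.mem_sup_left (edgeBinomial_mem ⟨hij, hi, hj⟩)

theorem X_mul_edgeBinomial_mem {G : SimpleGraph V} {v a b : V} (ha : G.Adj v a)
    (hb : G.Adj v b) {n : V ⊕ V} (hn : n ∈ ({Sum.inl v, Sum.inr v} : Set (V ⊕ V))) :
    X n * edgeBinomial K a b ∈ binomialEdgeIdeal K G := by
  have hfa := edgeBinomial_mem (K := K) ha
  have hfb := edgeBinomial_mem (K := K) hb
  rcases hn with rfl | rfl
  · have : X (Sum.inl v) * edgeBinomial K a b =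
        X (Sum.inl a) * edgeBinomial K v b - X (Sum.inl b) * edgeBinomial K v a := by
      simp only [edgeBinomial]; ring
    rw [this]
    exact sub_mem (Ideal.mul_mem_left _ _ hfb) (Ideal.mul_mem_left _ _ hfa)
  · have : X (Sum.inr v) * edgeBinomial K a b =
        X (Sum.inr a) * edgeBinomial K v b - X (Sum.inr b) * edgeBinomial K v a := by
      simp only [edgeBinomial]; ring
    rw [this]
    exact sub_mem (Ideal.mul_mem_left _ _ hfb) (Ideal.mul_mem_left _ _ hfa)

theorem span_X_mul_binomialEdgeIdeal_neighborSet_le (G : SimpleGraph V) (v : V) :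
    Ideal.span (X '' {Sum.inl v, Sum.inr v}) *
        binomialEdgeIdeal K (inducedOn ⊤ (G.neighborSet v)) ≤ binomialEdgeIdeal K G := by
  rw [binomialEdgeIdeal, Ideal.span_mul_span', Ideal.span_le]
  rintro _ ⟨_, ⟨n, hn, rfl⟩, _, ⟨a, b, ⟨-, ha, hb⟩, rfl⟩, rfl⟩
  exact X_mul_edgeBinomial_mem ha hb hn

theorem sub_killVars_mem_of_mem_gvGraph {G : SimpleGraph V} {v : V}
    {f : MvPolynomial (V ⊕ V) K} (hf : f ∈ binomialEdgeIdeal K (gvGraph G v)) :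
    f - killVars {Sum.inl v, Sum.inr v} f ∈ binomialEdgeIdeal K G := by
  rw [gvGraph_eq_sup, binomialEdgeIdeal_sup] at hf
  obtain ⟨g, hg, h, hh, rfl⟩ := Submodule.mem_sup.mp hf
  rw [map_add, add_sub_add_comm]
  refine add_mem (sub_mem hg (binomialEdgeIdeal_le_comap_killVars G v hg))
    (span_X_mul_binomialEdgeIdeal_neighborSet_le G v ?_)
  refine Ideal.sub_mem_mul_span_of_forall_sub_mem _ (sub_killVars_mem_span_X_image _) ?_ hh
  rintro _ ⟨i, j, hij, rfl⟩
  exact killVars_edgeBinomial_of_adj (not_adj_inducedOn_of_notMem (G.loopless.irrefl v)) hij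

end BinomialEdgeIdeal

end

open BinomialEdgeIdeal

theorem ohtani_lemma_general {K : Type} [Field K] {V : Type}
    (G : SimpleGraph V) (v : V) :
    binomialEdgeIdeal K G =
      (binomialEdgeIdeal K (inducedOn G {u | u ≠ v}) +
          Ideal.span {(X (Sum.inl v) : MvPolynomial (V ⊕ V) K), X (Sum.inr v)}) ⊓
        binomialEdgeIdeal K (gvGraph G v) := by
  rw [← Set.image_pair]
  refine le_antisymm
    (le_inf (binomialEdgeIdeal_le_inducedOn_sup G v) (binomialEdgeIdeal_mono (le_gvGraph G v))) ?_
  rintro f ⟨hf_del, hf_gv⟩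
  have h_kill : killVars {Sum.inl v, Sum.inr v} f ∈ binomialEdgeIdeal K G :=
    binomialEdgeIdeal_mono (inducedOn_le G _)
      (killVars_mem_of_mem_sup (not_adj_inducedOn_of_notMem (W := {u | u ≠ v}) (· rfl)) hf_del)
  simpa only [sub_add_cancel] using add_mem (sub_killVars_mem_of_mem_gvGraph hf_gv) h_kill

/-- Ohtani's lemma. If `v` is not a simplicial vertex of `G`
(its neighborhood is not a clique), then
`J_G = (J_{G∖v} + (x_v, y_v)) ∩ J_{G_v}`. -/
theorem ohtani_lemma {K : Type} [Field K] {V : Type} [Fintype V] [DecidableEq V]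
    (G : SimpleGraph V) (v : V)
    (hv : ¬ G.IsClique (G.neighborSet v)) :
    binomialEdgeIdeal K G =
      (binomialEdgeIdeal K (inducedOn G {u | u ≠ v}) +
          Ideal.span {(X (Sum.inl v) : MvPolynomial (V ⊕ V) K), X (Sum.inr v)}) ⊓
        binomialEdgeIdeal K (gvGraph G v) :=
  ohtani_lemma_general G v
end
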